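/- (1) For all strictly positive formulas φ, ψ: if 𝒯(φ) ↪* 𝒯(ψ) then φ ⊢ ψ is derivable in RC. (2) For all modal trees T, T': if ℱ(T) ⊢ ℱ(T') is derivable in RC, then T ↪* T'. -/

import Mathlib

namespace TRC

/-- Strictly positive formulas of `L⁺`. -/
inductive SPF : Type where
  | top : SPF
  | var : ℕ → SPF
  | dia : ℕ → SPF → SPF
  | and : SPF → SPF → SPF

/-- The sequent system `K⁺`. -/
inductive KPlus : SPF → SPF → Prop where
  | id (φ) : KPlus φ φ
  | topI (φ) : KPlus φ .top
  | cut {φ ψ χ} : KPlus φ ψ → KPlus ψ χ → KPlus φ χ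
  | andE₁ (φ ψ) : KPlus (.and φ ψ) φ
  | andE₂ (φ ψ) : KPlus (.and φ ψ) ψ
  | andI {φ ψ χ} : KPlus φ ψ → KPlus φ χ → KPlus φ (.and ψ χ)
  | dist {φ ψ} (α) : KPlus φ ψ → KPlus (.dia α φ) (.dia α ψ)

/-- The Reflection Calculus `RC`. -/
inductive RC : SPF → SPF → Prop where
  | id (φ) : RC φ φ
  | topI (φ) : RC φ .top
  | cut {φ ψ χ} : RC φ ψ → RC ψ χ → RC φ χ
  | andE₁ (φ ψ) : RC (.and φ ψ) φ
  | andE₂ (φ ψ) : RC (.and φ ψ) ψ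
  | andI {φ ψ χ} : RC φ ψ → RC φ χ → RC φ (.and ψ χ)
  | dist {φ ψ} (α) : RC φ ψ → RC (.dia α φ) (.dia α ψ)
  | trans (α φ) : RC (.dia α (.dia α φ)) (.dia α φ)
  | mono {α β} (φ) : β < α → RC (.dia α φ) (.dia β φ)
  | jax {α β} (φ ψ) : β < α → RC (.and (.dia α φ) (.dia β ψ)) (.dia α (.and φ (.dia β ψ)))

/-- Modal depth. -/
def SPF.md : SPF → ℕ
  | .top => 0
  | .var _ => 0
  | .dia _ φ => φ.md + 1
  | .and φ ψ => max φ.md ψ.md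

/-- Modal trees. -/
inductive MTree : Type where
  | node : List ℕ → List (ℕ × MTree) → MTree

/-- Sum of modal trees. -/
def MTree.sum : MTree → MTree → MTree
  | .node Δ₁ Γ₁, .node Δ₂ Γ₂ => .node (Δ₁ ++ Δ₂) (Γ₁ ++ Γ₂)

mutual
/-- Height of a modal tree. -/
def MTree.height : MTree → ℕ
  | .node _ Γ => heightL Γ
def heightL : List (ℕ × MTree) → ℕ
  | [] => 0
  | (_, S) :: Γ => max (S.height + 1) (heightL Γ)
end

mutual
/-- `T.IsPos k`: the (1-indexed) string `k` is a position of `T`. -/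
def MTree.IsPos : MTree → List ℕ → Prop
  | _, [] => True
  | .node _ Γ, i :: k => isPosL Γ i k
def isPosL : List (ℕ × MTree) → ℕ → List ℕ → Prop
  | [], _, _ => False
  | _ :: _, 0, _ => False
  | (_, S) :: _, 1, k => S.IsPos k
  | _ :: Γ, n+2, k => isPosL Γ (n+1) k
end

mutual
/-- Subtree of `T` at position `k` (returning a default junk value off positions). -/
def MTree.subtree : MTree → List ℕ → MTree
  | T, [] => T
  | .node Δ Γ, i :: k => subtreeL (.node Δ Γ) Γ i k
def subtreeL : MTree → List (ℕ × MTree) → ℕ → List ℕ → MTree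
  | d, [], _, _ => d
  | d, _ :: _, 0, _ => d
  | _, (_, S) :: _, 1, k => S.subtree k
  | d, _ :: Γ, n+2, k => subtreeL d Γ (n+1) k
end

mutual
/-- `T.replace S k`: replace the subtree of `T` at position `k` by `S`. -/
def MTree.replace : MTree → MTree → List ℕ → MTree
  | _, S, [] => S
  | .node Δ Γ, S, i :: k => .node Δ (replaceL Γ S i k)
def replaceL : List (ℕ × MTree) → MTree → ℕ → List ℕ → List (ℕ × MTree)
  | [], _, _, _ => []
  | Γ, _, 0, _ => Γ
  | (α, C) :: Γ, S, 1, k => (α, C.replace S k) :: Γ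
  | x :: Γ, S, n+2, k => x :: replaceL Γ S (n+1) k
end

/-- Names of the eight rewriting rules of TRC. -/
inductive Rule : Type where
  | rhoP | rhoM | sigma | piP | piM | four | lam | jay
  deriving DecidableEq

/-- One rewriting step performed at the root. -/
inductive RootStep : Rule → MTree → MTree → Prop where
  | rhoP {Δ Γ i p} (hi : 1 ≤ i) (h : Δ[i-1]? = some p) :
      RootStep .rhoP (.node Δ Γ) (.node (p :: Δ) Γ)
  | rhoM {Δ Γ i} (hi : 1 ≤ i) (h : i - 1 < Δ.length) :
      RootStep .rhoM (.node Δ Γ) (.node (Δ.eraseIdx (i-1)) Γ)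
  | sigma {Δ Γ i j x y} (hi : 1 ≤ i) (hj : 1 ≤ j) (hij : i ≠ j)
      (hx : Γ[i-1]? = some x) (hy : Γ[j-1]? = some y) :
      RootStep .sigma (.node Δ Γ) (.node Δ ((Γ.set (j-1) x).set (i-1) y))
  | piP {Δ Γ i x} (hi : 1 ≤ i) (hx : Γ[i-1]? = some x) :
      RootStep .piP (.node Δ Γ) (.node Δ (x :: Γ))
  | piM {Δ Γ i} (hi : 1 ≤ i) (h : i - 1 < Γ.length) :
      RootStep .piM (.node Δ Γ) (.node Δ (Γ.eraseIdx (i-1)))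
  | four {Δ Γ i j β Δt Γt S} (hi : 1 ≤ i) (hj : 1 ≤ j)
      (hΓ : Γ[i-1]? = some (β, MTree.node Δt Γt)) (hΓt : Γt[j-1]? = some (β, S)) :
      RootStep .four (.node Δ Γ) (.node Δ (Γ.set (i-1) (β, S)))
  | lam {Δ Γ i α β S} (hi : 1 ≤ i) (hβ : β < α) (hΓ : Γ[i-1]? = some (α, S)) :
      RootStep .lam (.node Δ Γ) (.node Δ (Γ.set (i-1) (β, S)))
  | jay {Δ Γ i j α β Δt Γt S} (hi : 1 ≤ i) (hj : 1 ≤ j) (hij : i ≠ j) (hβ : β < α)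
      (hΓi : Γ[i-1]? = some (α, MTree.node Δt Γt)) (hΓj : Γ[j-1]? = some (β, S)) :
      RootStep .jay (.node Δ Γ)
        (.node Δ ((Γ.set (i-1) (α, MTree.node Δt (Γt ++ [(β, S)]))).eraseIdx (j-1)))

/-- One step of the rule `r`, applied at some position. -/
def StepR (r : Rule) (T T' : MTree) : Prop :=
  ∃ k S, T.IsPos k ∧ RootStep r (T.subtree k) S ∧ T' = T.replace S k

/-- One step of the rewriting relation `↪`. -/
def Step (T T' : MTree) : Prop := ∃ r, StepR r T T'

/-- The rewriting relation `↪*`. -/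
def Steps : MTree → MTree → Prop := Relation.ReflTransGen Step

/-- TRC-equivalence `↔*`. -/
def TEquiv (T T' : MTree) : Prop := Steps T T' ∧ Steps T' T

/-- `T ↪^Ω S` : rewriting applying the rules of `Ω` in order, one step each. -/
inductive StepsOf : List Rule → MTree → MTree → Prop where
  | nil (T) : StepsOf [] T T
  | cons {r Ω T U S} : StepR r T U → StepsOf Ω U S → StepsOf (r :: Ω) T S

def AtomicStep (T S : MTree) : Prop := StepR .rhoP T S ∨ StepR .rhoM T S
def DecreasingStep (T S : MTree) : Prop := StepR .piM T S ∨ StepR .four T S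
def ModalStep (T S : MTree) : Prop := StepR .lam T S ∨ StepR .jay T S

/-- Finite conjunctions (empty conjunction is `⊤`). -/
def bigAnd : List SPF → SPF
  | [] => .top
  | φ :: l => .and φ (bigAnd l)

mutual
/-- The embedding `ℱ` of modal trees into formulas. -/
def MTree.toFormula : MTree → SPF
  | .node Δ Γ => .and (bigAnd (Δ.map SPF.var)) (diamL Γ)
def diamL : List (ℕ × MTree) → SPF
  | [] => .top
  | (α, S) :: Γ => .and (.dia α S.toFormula) (diamL Γ)
end

/-- The embedding `𝒯` of formulas into modal trees. -/
def SPF.toTree : SPF → MTree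
  | .top => .node [] []
  | .var p => .node [p] []
  | .dia α φ => .node [] [(α, φ.toTree)]
  | .and φ ψ => φ.toTree.sum ψ.toTree

/-- Nonempty conjunction `φ₁ ∧ (φ₂ ∧ (… ∧ φₙ))`. -/
def conjNE : SPF → List SPF → SPF
  | φ, [] => φ
  | φ, ψ :: l => .and φ (conjNE ψ l)

end TRC

/-!
Soundness: for every root rewriting step `T ↪ T'` the sequent `ℱ(T) ⊢ ℱ(T')` is derivable in
RC (𝔣4, λ and J by the transitivity, monotonicity and J axioms, the other rules by conjunction
bookkeeping), and RC derivations propagate under `⟨α⟩` and conjunction, so `T ↪* T'` gives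
`ℱ(T) ⊢ ℱ(T')`; since `φ ⊣⊢ ℱ(𝒯(φ))` this is (1).

Completeness: `𝒯(ℱ(T)) = T`, and every rule of RC is simulated by rewriting. Copying and erasing
atoms and diamonds give `⟨Δ;Γ⟩ ↪* ⟨Δ';Γ'⟩` whenever `Δ' ⊆ Δ` and `Γ' ⊆ Γ`, which covers the
structural rules and `T ↪* T + T`; `↪*` is a congruence for `+` (in the left summand because a
step of `T` is also a step of `T + V` at the same position, in the right summand by commuting the
summands); the modal axioms are single 𝔣4, λ and J steps.
-/

namespace TRC

open List

theorem rc_bigAnd_of_mem {l : List SPF} {φ : SPF} (h : φ ∈ l) : RC (bigAnd l) φ := by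
  induction l with
  | nil => simp at h
  | cons ψ l ih =>
    rcases mem_cons.mp h with rfl | h
    · exact RC.andE₁ _ _
    · exact RC.cut (RC.andE₂ _ _) (ih h)

theorem rc_bigAnd_of_forall {χ : SPF} {l : List SPF} (h : ∀ φ ∈ l, RC χ φ) :
    RC χ (bigAnd l) := by
  induction l with
  | nil => exact RC.topI _
  | cons φ l ih => exact RC.andI (h φ mem_cons_self) (ih fun ψ hψ => h ψ (mem_cons_of_mem _ hψ))

theorem rc_diamL_of_mem {Γ : List (ℕ × MTree)} {x : ℕ × MTree} (h : x ∈ Γ) :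
    RC (diamL Γ) (.dia x.1 x.2.toFormula) := by
  induction Γ with
  | nil => simp at h
  | cons y Γ ih =>
    rcases mem_cons.mp h with rfl | h
    · exact RC.andE₁ _ _
    · exact RC.cut (RC.andE₂ _ _) (ih h)

theorem rc_diamL_of_forall {χ : SPF} {Γ : List (ℕ × MTree)}
    (h : ∀ x ∈ Γ, RC χ (.dia x.1 x.2.toFormula)) : RC χ (diamL Γ) := by
  induction Γ with
  | nil => exact RC.topI _
  | cons x Γ ih => exact RC.andI (h x mem_cons_self) (ih fun y hy => h y (mem_cons_of_mem _ hy))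

theorem rc_toFormula_var {Δ : List ℕ} {Γ : List (ℕ × MTree)} {p : ℕ} (h : p ∈ Δ) :
    RC (MTree.node Δ Γ).toFormula (.var p) :=
  RC.cut (RC.andE₁ _ _) (rc_bigAnd_of_mem (mem_map_of_mem h))

theorem rc_toFormula_dia {Δ : List ℕ} {Γ : List (ℕ × MTree)} {x : ℕ × MTree} (h : x ∈ Γ) :
    RC (MTree.node Δ Γ).toFormula (.dia x.1 x.2.toFormula) :=
  RC.cut (RC.andE₂ _ _) (rc_diamL_of_mem h)

theorem rc_toFormula_of_forall {χ : SPF} {Δ : List ℕ} {Γ : List (ℕ × MTree)}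
    (hΔ : ∀ p ∈ Δ, RC χ (.var p)) (hΓ : ∀ x ∈ Γ, RC χ (.dia x.1 x.2.toFormula)) :
    RC χ (MTree.node Δ Γ).toFormula := by
  refine RC.andI (rc_bigAnd_of_forall fun φ hφ => ?_) (rc_diamL_of_forall hΓ)
  obtain ⟨p, hp, rfl⟩ := mem_map.mp hφ
  exact hΔ p hp

theorem rc_toFormula_of_subset {Δ Δ' : List ℕ} {Γ Γ' : List (ℕ × MTree)} (hΔ : Δ' ⊆ Δ)
    (hΓ : ∀ x ∈ Γ', RC (MTree.node Δ Γ).toFormula (.dia x.1 x.2.toFormula)) :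
    RC (MTree.node Δ Γ).toFormula (MTree.node Δ' Γ').toFormula :=
  rc_toFormula_of_forall (fun _ hp => rc_toFormula_var (hΔ hp)) hΓ

theorem rc_toFormula_sum (T U : MTree) :
    RC (.and T.toFormula U.toFormula) (T.sum U).toFormula := by
  obtain ⟨Δ₁, Γ₁⟩ := T
  obtain ⟨Δ₂, Γ₂⟩ := U
  refine rc_toFormula_of_forall (fun p hp => ?_) (fun x hx => ?_)
  · rcases mem_append.mp hp with hp | hp
    · exact RC.cut (RC.andE₁ _ _) (rc_toFormula_var hp)
    · exact RC.cut (RC.andE₂ _ _) (rc_toFormula_var hp)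
  · rcases mem_append.mp hx with hx | hx
    · exact RC.cut (RC.andE₁ _ _) (rc_toFormula_dia hx)
    · exact RC.cut (RC.andE₂ _ _) (rc_toFormula_dia hx)

theorem rc_sum_toFormula_left (T U : MTree) : RC (T.sum U).toFormula T.toFormula := by
  obtain ⟨Δ₁, Γ₁⟩ := T
  obtain ⟨Δ₂, Γ₂⟩ := U
  exact rc_toFormula_of_subset (subset_append_left _ _)
    fun _ hx => rc_toFormula_dia (mem_append_left _ hx)

theorem rc_sum_toFormula_right (T U : MTree) : RC (T.sum U).toFormula U.toFormula := by
  obtain ⟨Δ₁, Γ₁⟩ := T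
  obtain ⟨Δ₂, Γ₂⟩ := U
  exact rc_toFormula_of_subset (subset_append_right _ _)
    fun _ hx => rc_toFormula_dia (mem_append_right _ hx)

theorem rc_toTree_toFormula (φ : SPF) :
    RC φ φ.toTree.toFormula ∧ RC φ.toTree.toFormula φ := by
  induction φ with
  | top => exact ⟨RC.andI (RC.topI _) (RC.topI _), RC.topI _⟩
  | var p =>
    exact ⟨RC.andI (RC.andI (RC.id _) (RC.topI _)) (RC.topI _),
      RC.cut (RC.andE₁ _ _) (RC.andE₁ _ _)⟩
  | dia α φ ih =>
    exact ⟨RC.andI (RC.topI _) (RC.andI (RC.dist α ih.1) (RC.topI _)),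
      RC.cut (RC.andE₂ _ _) (RC.cut (RC.andE₁ _ _) (RC.dist α ih.2))⟩
  | and φ ψ ihφ ihψ =>
    refine ⟨RC.cut (RC.andI (RC.cut (RC.andE₁ _ _) ihφ.1) (RC.cut (RC.andE₂ _ _) ihψ.1))
      (rc_toFormula_sum _ _), RC.andI ?_ ?_⟩
    · exact RC.cut (rc_sum_toFormula_left _ _) ihφ.2
    · exact RC.cut (rc_sum_toFormula_right _ _) ihψ.2

theorem rc_toFormula_append_dia (Δ : List ℕ) (Γ : List (ℕ × MTree)) (β : ℕ) (S : MTree) :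
    RC (.and (MTree.node Δ Γ).toFormula (.dia β S.toFormula))
      (MTree.node Δ (Γ ++ [(β, S)])).toFormula := by
  refine rc_toFormula_of_forall (fun p hp => RC.cut (RC.andE₁ _ _) (rc_toFormula_var hp))
    (fun x hx => ?_)
  rcases mem_append.mp hx with hx | hx
  · exact RC.cut (RC.andE₁ _ _) (rc_toFormula_dia hx)
  · rw [mem_singleton.mp hx]
    exact RC.andE₂ _ _

theorem RootStep.sound {r : Rule} {T U : MTree} (h : RootStep r T U) :
    RC T.toFormula U.toFormula := by
  cases h with
  | rhoP _ h =>
    refine rc_toFormula_of_subset (fun p hp => ?_) fun _ hx => rc_toFormula_dia hx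
    rcases mem_cons.mp hp with rfl | hp
    exacts [mem_of_getElem? h, hp]
  | rhoM =>
    exact rc_toFormula_of_subset (fun _ hp => mem_of_mem_eraseIdx hp)
      fun _ hx => rc_toFormula_dia hx
  | sigma _ _ _ hx hy =>
    refine rc_toFormula_of_subset (Subset.refl _) fun z hz => ?_
    rcases mem_or_eq_of_mem_set hz with hz | rfl
    · rcases mem_or_eq_of_mem_set hz with hz | rfl
      exacts [rc_toFormula_dia hz, rc_toFormula_dia (mem_of_getElem? hx)]
    · exact rc_toFormula_dia (mem_of_getElem? hy)
  | piP _ hx =>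
    refine rc_toFormula_of_subset (Subset.refl _) fun z hz => ?_
    rcases mem_cons.mp hz with rfl | hz
    exacts [rc_toFormula_dia (mem_of_getElem? hx), rc_toFormula_dia hz]
  | piM =>
    exact rc_toFormula_of_subset (Subset.refl _)
      fun _ hx => rc_toFormula_dia (mem_of_mem_eraseIdx hx)
  | four _ _ hΓ hΓt =>
    refine rc_toFormula_of_subset (Subset.refl _) fun z hz => ?_
    rcases mem_or_eq_of_mem_set hz with hz | rfl
    · exact rc_toFormula_dia hz
    · exact RC.cut (rc_toFormula_dia (mem_of_getElem? hΓ))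
        (RC.cut (RC.dist _ (rc_toFormula_dia (mem_of_getElem? hΓt))) (RC.trans _ _))
  | lam _ hβ hΓ =>
    refine rc_toFormula_of_subset (Subset.refl _) fun z hz => ?_
    rcases mem_or_eq_of_mem_set hz with hz | rfl
    · exact rc_toFormula_dia hz
    · exact RC.cut (rc_toFormula_dia (mem_of_getElem? hΓ)) (RC.mono _ hβ)
  | jay _ _ _ hβ hΓi hΓj =>
    refine rc_toFormula_of_subset (Subset.refl _) fun z hz => ?_
    rcases mem_or_eq_of_mem_set (mem_of_mem_eraseIdx hz) with hz | rfl
    · exact rc_toFormula_dia hz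
    · refine RC.cut (RC.andI (rc_toFormula_dia (mem_of_getElem? hΓi))
        (rc_toFormula_dia (mem_of_getElem? hΓj))) (RC.cut (RC.jax _ _ hβ) (RC.dist _ ?_))
      exact rc_toFormula_append_dia _ _ _ _

theorem exists_eq_append_of_isPosL : ∀ (Γ : List (ℕ × MTree)) (i : ℕ) (k : List ℕ),
    isPosL Γ i k → ∃ L α C R, Γ = L ++ (α, C) :: R ∧ i = L.length + 1 ∧ C.IsPos k ∧
      (∀ d, subtreeL d Γ i k = C.subtree k) ∧
      (∀ S, replaceL Γ S i k = L ++ (α, C.replace S k) :: R)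
  | [], _, _, h => h.elim
  | _ :: _, 0, _, h => h.elim
  | (α, C) :: Γ, 1, _, h => ⟨[], α, C, Γ, rfl, rfl, h, fun _ => rfl, fun _ => rfl⟩
  | x :: Γ, n + 2, k, h => by
    obtain ⟨L, α, C, R, rfl, hi, hC, hsub, hrep⟩ := exists_eq_append_of_isPosL Γ (n + 1) k h
    exact ⟨x :: L, α, C, R, rfl, by simp; omega, hC, hsub, fun S => by simp [replaceL, hrep]⟩

theorem exists_eq_append_of_isPos {Δ : List ℕ} {Γ : List (ℕ × MTree)} {i : ℕ} {k : List ℕ}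
    (h : (MTree.node Δ Γ).IsPos (i :: k)) :
    ∃ L α C R, Γ = L ++ (α, C) :: R ∧ i = L.length + 1 ∧ C.IsPos k ∧
      (MTree.node Δ Γ).subtree (i :: k) = C.subtree k ∧
      ∀ S, (MTree.node Δ Γ).replace S (i :: k) = .node Δ (L ++ (α, C.replace S k) :: R) := by
  obtain ⟨L, α, C, R, hΓ, hi, hC, hsub, hrep⟩ := exists_eq_append_of_isPosL Γ i k h
  exact ⟨L, α, C, R, hΓ, hi, hC, hsub _, fun S => congrArg _ (hrep S)⟩

theorem rc_replace {S : MTree} : ∀ (k : List ℕ) (T : MTree), T.IsPos k →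
    RC (T.subtree k).toFormula S.toFormula → RC T.toFormula (T.replace S k).toFormula
  | [], _, _, h => by simpa [MTree.subtree, MTree.replace] using h
  | i :: k, .node Δ Γ, hk, h => by
    obtain ⟨L, α, C, R, rfl, -, hC, hsub, hrep⟩ := exists_eq_append_of_isPos hk
    rw [hsub] at h
    rw [hrep]
    refine rc_toFormula_of_subset (Subset.refl _) fun x hx => ?_
    rcases mem_append.mp hx with hx | hx
    · exact rc_toFormula_dia (mem_append_left _ hx)
    rcases mem_cons.mp hx with rfl | hx
    · exact RC.cut (rc_toFormula_dia (mem_append_right L mem_cons_self))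
        (RC.dist _ (rc_replace k C hC h))
    · exact rc_toFormula_dia (mem_append_right _ (mem_cons_of_mem _ hx))

theorem Steps.sound {T U : MTree} (h : Steps T U) : RC T.toFormula U.toFormula := by
  induction h with
  | refl => exact RC.id _
  | tail _ hstep ih =>
    obtain ⟨_, k, S, hk, hroot, rfl⟩ := hstep
    exact RC.cut ih (rc_replace k _ hk hroot.sound)

theorem rc_of_steps_toTree {φ ψ : SPF} (h : Steps φ.toTree ψ.toTree) : RC φ ψ :=
  RC.cut (rc_toTree_toFormula φ).1 (RC.cut h.sound (rc_toTree_toFormula ψ).2)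

theorem _root_.List.reflTransGen_of_subset {α : Type*} {R : List α → List α → Prop}
    (copy : ∀ a l, a ∈ l → R l (a :: l)) (erase : ∀ P a Q, R (P ++ a :: Q) (P ++ Q))
    {l l' : List α} (h : l' ⊆ l) : Relation.ReflTransGen R l l' := by
  have prepend : ∀ l', l' ⊆ l → Relation.ReflTransGen R l (l' ++ l) := by
    intro l' hl'
    induction l' with
    | nil => exact .refl
    | cons a l' ih =>
      exact .tail (ih (cons_subset.mp hl').2)
        (copy _ _ (mem_append_right _ (cons_subset.mp hl').1))
  have truncate : ∀ X P, Relation.ReflTransGen R (P ++ X) P := by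
    intro X
    induction X with
    | nil => exact fun P => by rw [append_nil]
    | cons a X ih => exact fun P => .head (erase P a X) (ih P)
  exact (prepend l' h).trans (truncate l l')

theorem RootStep.step {r : Rule} {T U : MTree} (h : RootStep r T U) : Step T U :=
  ⟨r, [], U, by simp [MTree.IsPos], by simpa [MTree.subtree] using h, by simp [MTree.replace]⟩

theorem steps_of_subset {Δ Δ' : List ℕ} {Γ Γ' : List (ℕ × MTree)} (hΔ : Δ' ⊆ Δ)
    (hΓ : Γ' ⊆ Γ) : Steps (.node Δ Γ) (.node Δ' Γ') := by
  have atoms : Steps (.node Δ Γ) (.node Δ' Γ) := by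
    refine Relation.ReflTransGen.lift (fun Δ => MTree.node Δ Γ) (fun _ _ h => h) _ _
      (reflTransGen_of_subset (R := fun Δ₁ Δ₂ => Step (.node Δ₁ Γ) (.node Δ₂ Γ))
        (fun p Δ hp => ?_) (fun P p Q => ?_) hΔ)
    · obtain ⟨i, hi⟩ := mem_iff_getElem?.mp hp
      exact (RootStep.rhoP (i := i + 1) (by omega) hi).step
    · simpa [eraseIdx_append_of_length_le] using
        (RootStep.rhoM (Δ := P ++ p :: Q) (Γ := Γ) (i := P.length + 1) (by omega) (by simp)).step
  have dias : Steps (.node Δ' Γ) (.node Δ' Γ') := by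
    refine Relation.ReflTransGen.lift (fun Γ => MTree.node Δ' Γ) (fun _ _ h => h) _ _
      (reflTransGen_of_subset (R := fun Γ₁ Γ₂ => Step (.node Δ' Γ₁) (.node Δ' Γ₂))
        (fun x Γ hx => ?_) (fun P x Q => ?_) hΓ)
    · obtain ⟨i, hi⟩ := mem_iff_getElem?.mp hx
      exact (RootStep.piP (i := i + 1) (by omega) hi).step
    · simpa [eraseIdx_append_of_length_le] using
        (RootStep.piM (Δ := Δ') (Γ := P ++ x :: Q) (i := P.length + 1) (by omega) (by simp)).step
  exact atoms.trans dias

theorem steps_sum_self (T : MTree) : Steps T (T.sum T) := by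
  obtain ⟨Δ, Γ⟩ := T
  exact steps_of_subset (append_subset.mpr ⟨Subset.refl _, Subset.refl _⟩)
    (append_subset.mpr ⟨Subset.refl _, Subset.refl _⟩)

theorem steps_sum_left (T U : MTree) : Steps (T.sum U) T := by
  obtain ⟨Δ₁, Γ₁⟩ := T
  obtain ⟨Δ₂, Γ₂⟩ := U
  exact steps_of_subset (subset_append_left _ _) (subset_append_left _ _)

theorem steps_sum_right (T U : MTree) : Steps (T.sum U) U := by
  obtain ⟨Δ₁, Γ₁⟩ := T
  obtain ⟨Δ₂, Γ₂⟩ := U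
  exact steps_of_subset (subset_append_right _ _) (subset_append_right _ _)

theorem steps_sum_comm (T U : MTree) : Steps (T.sum U) (U.sum T) := by
  obtain ⟨Δ₁, Γ₁⟩ := T
  obtain ⟨Δ₂, Γ₂⟩ := U
  exact steps_of_subset (append_subset.mpr ⟨subset_append_right _ _, subset_append_left _ _⟩)
    (append_subset.mpr ⟨subset_append_right _ _, subset_append_left _ _⟩)

theorem steps_top (T : MTree) : Steps T (.node [] []) := by
  obtain ⟨Δ, Γ⟩ := T
  exact steps_of_subset (nil_subset _) (nil_subset _)

theorem Step.node_context {Δ : List ℕ} {L R : List (ℕ × MTree)} {α : ℕ} {C C' : MTree}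
    (h : Step C C') : Step (.node Δ (L ++ (α, C) :: R)) (.node Δ (L ++ (α, C') :: R)) := by
  obtain ⟨r, k, S, hk, hroot, rfl⟩ := h
  have hpos : (MTree.node Δ (L ++ (α, C) :: R)).IsPos ((L.length + 1) :: k) := by
    induction L with
    | nil => exact hk
    | cons x L ih => exact ih
  obtain ⟨L', α', C', R', hΓ, hi, -, hsub, hrep⟩ := exists_eq_append_of_isPos hpos
  obtain ⟨rfl, hcons⟩ := append_inj hΓ (by omega)
  obtain ⟨⟨rfl, rfl⟩, rfl⟩ := cons_eq_cons.mp hcons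
  exact ⟨r, _, S, hpos, hsub ▸ hroot, (hrep S).symm⟩

theorem Steps.node_context {Δ : List ℕ} {L R : List (ℕ × MTree)} {α : ℕ} {C C' : MTree}
    (h : Steps C C') : Steps (.node Δ (L ++ (α, C) :: R)) (.node Δ (L ++ (α, C') :: R)) :=
  Relation.ReflTransGen.lift (fun X => MTree.node Δ (L ++ (α, X) :: R))
    (fun _ _ => Step.node_context) _ _ h

theorem RootStep.sum_right {r : Rule} {T U : MTree} (h : RootStep r T U) (V : MTree) :
    RootStep r (T.sum V) (U.sum V) := by
  obtain ⟨Δ', Γ'⟩ := V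
  have get_append {β : Type} {l : List β} {i : ℕ} {a : β} (h : l[i]? = some a) (l' : List β) :
      (l ++ l')[i]? = some a := by
    rw [getElem?_append_left (List.getElem?_eq_some_iff.mp h).1, h]
  cases h with
  | rhoP hi h => exact .rhoP hi (get_append h _)
  | @rhoM Δ Γ _ hi h =>
    simpa [MTree.sum, eraseIdx_append_of_lt_length h] using
      RootStep.rhoM (Δ := Δ ++ Δ') (Γ := Γ ++ Γ') hi (by simp; omega)
  | sigma hi hj hij hx hy =>
    simpa [MTree.sum, of_getElem?_eq_some hx, of_getElem?_eq_some hy] using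
      RootStep.sigma (Δ := _ ++ Δ') hi hj hij (get_append hx Γ') (get_append hy Γ')
  | piP hi hx => exact .piP hi (get_append hx _)
  | @piM Δ Γ _ hi h =>
    simpa [MTree.sum, eraseIdx_append_of_lt_length h] using
      RootStep.piM (Δ := Δ ++ Δ') (Γ := Γ ++ Γ') hi (by simp; omega)
  | four hi hj hΓ hΓt =>
    simpa [MTree.sum, of_getElem?_eq_some hΓ] using
      RootStep.four (Δ := _ ++ Δ') hi hj (get_append hΓ Γ') hΓt
  | lam hi hβ hΓ =>
    simpa [MTree.sum, of_getElem?_eq_some hΓ] using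
      RootStep.lam (Δ := _ ++ Δ') hi hβ (get_append hΓ Γ')
  | @jay Δ Γ i j α β Δt Γt S hi hj hij hβ hΓi hΓj =>
    simpa [MTree.sum, of_getElem?_eq_some hΓi, eraseIdx_append_of_lt_length
      (l := Γ.set (i - 1) (α, .node Δt (Γt ++ [(β, S)]))) (by simpa using of_getElem?_eq_some hΓj)]
      using RootStep.jay (Δ := Δ ++ Δ') hi hj hij hβ (get_append hΓi Γ') (get_append hΓj Γ')

theorem Step.sum_right {T U : MTree} (h : Step T U) (V : MTree) : Step (T.sum V) (U.sum V) := by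
  obtain ⟨Δ, Γ⟩ := T
  obtain ⟨Δ', Γ'⟩ := V
  obtain ⟨r, _ | ⟨i, k⟩, S, hk, hroot, rfl⟩ := h
  · simp only [MTree.subtree] at hroot ⊢
    exact (hroot.sum_right _).step
  · obtain ⟨L, α, C, R, rfl, -, hC, hsub, hrep⟩ := exists_eq_append_of_isPos hk
    rw [hsub] at hroot
    simpa [hrep, MTree.sum] using
      Step.node_context (Δ := Δ ++ Δ') (L := L) (α := α) (R := R ++ Γ')
        (⟨r, k, S, hC, hroot, rfl⟩ : Step C (C.replace S k))

theorem Steps.sum_right {T U : MTree} (h : Steps T U) (V : MTree) :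
    Steps (T.sum V) (U.sum V) :=
  Relation.ReflTransGen.lift (fun X : MTree => X.sum V) (fun _ _ hs => Step.sum_right hs V) _ _ h

theorem Steps.sum {T T' U U' : MTree} (h : Steps T U) (h' : Steps T' U') :
    Steps (T.sum T') (U.sum U') :=
  (h.sum_right T').trans <| (steps_sum_comm _ _).trans <|
    (h'.sum_right U).trans (steps_sum_comm _ _)

mutual

theorem toFormula_toTree : ∀ T : MTree, T.toFormula.toTree = T
  | .node Δ Γ => by
    have atoms : (bigAnd (Δ.map .var)).toTree = .node Δ [] := by
      induction Δ with
      | nil => rfl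
      | cons p Δ ih => simp [bigAnd, SPF.toTree, ih, MTree.sum]
    simp [MTree.toFormula, SPF.toTree, atoms, diamL_toTree Γ, MTree.sum]

theorem diamL_toTree : ∀ Γ : List (ℕ × MTree), (diamL Γ).toTree = .node [] Γ
  | [] => rfl
  | (α, S) :: Γ => by simp [diamL, SPF.toTree, toFormula_toTree S, diamL_toTree Γ, MTree.sum]

end

theorem steps_toTree_of_rc {φ ψ : SPF} (h : RC φ ψ) : Steps φ.toTree ψ.toTree := by
  induction h with
  | id => exact .refl
  | topI => exact steps_top _
  | cut _ _ ih₁ ih₂ => exact ih₁.trans ih₂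
  | andE₁ => exact steps_sum_left _ _
  | andE₂ => exact steps_sum_right _ _
  | andI _ _ ih₁ ih₂ => exact (steps_sum_self _).trans (ih₁.sum ih₂)
  | dist α _ ih => exact Steps.node_context (Δ := []) (L := []) (R := []) ih
  | trans α φ =>
    exact .single (RootStep.four (Γ := [(α, .node [] [(α, φ.toTree)])]) (i := 1) (j := 1)
      le_rfl le_rfl rfl rfl).step
  | mono φ hβ => exact .single (RootStep.lam (Γ := [(_, φ.toTree)]) (i := 1) le_rfl hβ rfl).step
  | jax φ ψ hβ =>
    rcases hφ : φ.toTree with ⟨Δ, Γ⟩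
    have : Steps _ _ := .single (RootStep.jay (Δ := []) (Γ := [(_, .node Δ Γ), (_, ψ.toTree)])
      (i := 1) (j := 2) le_rfl (by omega) (by omega) hβ rfl rfl).step
    simpa [SPF.toTree, hφ, MTree.sum] using this

end TRC

/-- (1) `𝒯(φ) ↪* 𝒯(ψ)` implies `φ ⊢_{RC} ψ`;
(2) `ℱ(T) ⊢_{RC} ℱ(T')` implies `T ↪* T'`. -/
theorem trc_rc_transfer :
    (∀ φ ψ : TRC.SPF, TRC.Steps φ.toTree ψ.toTree → TRC.RC φ ψ) ∧
    (∀ T T' : TRC.MTree, TRC.RC T.toFormula T'.toFormula → TRC.Steps T T') := by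
  refine ⟨fun φ ψ h => TRC.rc_of_steps_toTree h, fun T T' h => ?_⟩
  simpa only [TRC.toFormula_toTree] using TRC.steps_toTree_of_rc h
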